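/- Fix an integer n ≥ 1 and reals b₁, …, bₙ > 0. Let τ > 0 satisfy sin(bᵢτ/2) ≠ 0 for all i, and let h ∈ ℝ^{2n}, rᵢ = √(h_{2i−1}² + h_{2i}²). Then the matrix D(τ) = J̄⁻¹(e^{τJ̄} − I_{2n}) is invertible, and the row vector ∇_h ẑ(τ, h) (with entries (∂ẑ/∂h_j)(τ, h) = h_j·(bᵢτ − sin(bᵢτ))/bᵢ for j ∈ {2i−1, 2i}) satisfies: ∇_h ẑ(τ, h) · D(τ)⁻¹ · ( x̂(τ, h) − τ·ĥ(τ, h) ) − ( ẑ(τ, h) − τ·(∂ẑ/∂t)(τ, h) ) = Σ_{i=1}^{n} (rᵢ²/2)·( 3τ − bᵢτ²·cos(bᵢτ/2)/sin(bᵢτ/2) − sin(bᵢτ)/bᵢ ), where ∂ẑ/∂t(τ, h) = Σ_{i=1}^{n} (rᵢ²/2)·(1 − cos(bᵢτ)). -/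

import Mathlib

open Real Matrix

/-- The `2n×2n` block-diagonal matrix `J̄` whose `i`-th `2×2` diagonal block is
`[[0, bᵢ], [−bᵢ, 0]]`. -/
noncomputable def Jbar (n : ℕ) (b : Fin n → ℝ) :
    Matrix (Fin 2 × Fin n) (Fin 2 × Fin n) ℝ :=
  Matrix.blockDiagonal fun i => !![0, b i; -b i, 0]

/-- `D(τ) = J̄⁻¹(e^{τJ̄} − I)`. -/
noncomputable def Dmat (n : ℕ) (b : Fin n → ℝ) (τ : ℝ) :
    Matrix (Fin 2 × Fin n) (Fin 2 × Fin n) ℝ :=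
  (Jbar n b)⁻¹ * (NormedSpace.exp (τ • Jbar n b) - 1)

/-- The covector `ĥ(t, h) = e^{tJ̄}h` of the nilpotent geodesic flow. -/
noncomputable def hhat (n : ℕ) (b : Fin n → ℝ) (t : ℝ) (h : Fin 2 × Fin n → ℝ) :
    Fin 2 × Fin n → ℝ :=
  (NormedSpace.exp (t • Jbar n b)).mulVec h

/-- The horizontal component `x̂(t, h) = J̄⁻¹(e^{tJ̄} − I)h`. -/
noncomputable def xhat (n : ℕ) (b : Fin n → ℝ) (t : ℝ) (h : Fin 2 × Fin n → ℝ) :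
    Fin 2 × Fin n → ℝ :=
  (Dmat n b t).mulVec h

/-- The vertical component
`ẑ(t, h) = Σ_i (h_{2i−1}² + h_{2i}²)·(bᵢt − sin(bᵢt))/(2bᵢ)`;
the coordinate `h_{2i−1}` is the `(0, i)` entry of `h` and `h_{2i}` its `(1, i)` entry. -/
noncomputable def zhat (n : ℕ) (b : Fin n → ℝ) (t : ℝ) (h : Fin 2 × Fin n → ℝ) : ℝ :=
  ∑ i, (h (0, i) ^ 2 + h (1, i) ^ 2) * (b i * t - Real.sin (b i * t)) / (2 * b i)

/-- The gradient (row vector) of `ẑ` in `h`: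
`(∂ẑ/∂h_j)(τ, h) = h_j·(bᵢτ − sin(bᵢτ))/bᵢ` for `j ∈ {2i−1, 2i}`. -/
noncomputable def gradz (n : ℕ) (b : Fin n → ℝ) (τ : ℝ) (h : Fin 2 × Fin n → ℝ) :
    Fin 2 × Fin n → ℝ :=
  fun j => h j * (b j.2 * τ - Real.sin (b j.2 * τ)) / b j.2

/-!
Each block `[[0, bᵢ], [−bᵢ, 0]]` of `J̄` is the matrix of multiplication by `−bᵢ i` on `ℂ ≅ ℝ²`,
so every matrix in the statement is the image of a tuple of complex numbers under the
block-diagonal regular representation `ρ : ℂⁿ → M_{2n}(ℝ)`, a ring homomorphism commuting with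
`exp`. With `θ = bᵢτ`, the block of `D(τ)` is `dᵢ = (2 sin(θ/2)/bᵢ)·e^{−iθ/2}`, nonzero exactly
when `sin(θ/2) ≠ 0`, and `D(τ)⁻¹(x̂ − τĥ) = ρ(1 − τ e^{−iθ}/dᵢ) h`. Since `∇ₕẑ` is a real
multiple of `h` on each block and `ρ(zᵢ)` has quadratic form `Re zᵢ · |v|²`, the first term is
`Σᵢ (θ − sin θ)/bᵢ · (1 − (θ/2) cot(θ/2)) · rᵢ²`; the rest is a half-angle identity.
-/

namespace Matrix

lemma blockDiagonal_mulVec_apply {m o R : Type*} [Fintype m] [DecidableEq m] [Fintype o]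
    [DecidableEq o] [Semiring R] (M : o → Matrix m m R) (v : m × o → R) (k : m) (i : o) :
    (blockDiagonal M *ᵥ v) (k, i) = (M i *ᵥ fun k' => v (k', i)) k := by
  simp [mulVec, dotProduct, Fintype.sum_prod_type, blockDiagonal_apply]

end Matrix

lemma Complex.exp_neg_mul_I_sub_one (θ : ℂ) :
    exp (-(θ * I)) - 1 = -2 * I * sin (θ / 2) * exp (-(θ / 2 * I)) := by
  have hsq : exp (-(θ * I)) = exp (-(θ / 2 * I)) ^ 2 := by
    rw [← exp_nat_mul]; ring_nf
  have hinv : exp (θ / 2 * I) * exp (-(θ / 2 * I)) = 1 := by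
    rw [← exp_add]; simp
  rw [sin, hsq, neg_mul (θ / 2)]
  linear_combination hinv + (exp (-(θ / 2 * I)) - exp (θ / 2 * I)) * exp (-(θ / 2 * I)) * I_sq

noncomputable def complexBlocks {o : Type*} [Fintype o] [DecidableEq o] :
    (o → ℂ) →+* Matrix (Fin 2 × o) (Fin 2 × o) ℝ :=
  (blockDiagonalRingHom (Fin 2) o ℝ).comp <| RingHom.pi fun i =>
    (Algebra.leftMulMatrix Complex.basisOneI).toRingHom.comp (Pi.evalRingHom _ i)

section complexBlocks

variable {o : Type*} [Fintype o] [DecidableEq o]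

lemma complexBlocks_apply (z : o → ℂ) :
    complexBlocks z = blockDiagonal fun i => !![(z i).re, -(z i).im; (z i).im, (z i).re] :=
  congrArg blockDiagonal (funext fun i => Algebra.leftMulMatrix_complex (z i))

lemma smul_complexBlocks (r : ℝ) (z : o → ℂ) :
    r • complexBlocks z = complexBlocks fun i => r * z i := by
  simp only [complexBlocks_apply, ← blockDiagonal_smul]
  congr 1
  ext i : 1
  simp [smul_of]

lemma exp_complexBlocks (z : o → ℂ) :
    NormedSpace.exp (complexBlocks z) = complexBlocks fun i => Complex.exp (z i) := by
  -- Matrices carry no global norm; any norm inducing the product topology will do.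
  let _ : NormedRing (Matrix (Fin 2 × o) (Fin 2 × o) ℝ) := Matrix.linftyOpNormedRing
  let _ : NormedAlgebra ℝ (Matrix (Fin 2 × o) (Fin 2 × o) ℝ) := Matrix.linftyOpNormedAlgebra
  have hc : Continuous (complexBlocks : (o → ℂ) → _) := by
    simp only [funext complexBlocks_apply]
    fun_prop
  rw [Complex.exp_eq_exp_ℂ, ← Pi.exp_def]
  exact (NormedSpace.map_exp complexBlocks hc z).symm

lemma complexBlocks_mul_inv {z : o → ℂ} (hz : ∀ i, z i ≠ 0) :
    complexBlocks z * complexBlocks z⁻¹ = 1 := by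
  rw [← map_mul, show z * z⁻¹ = 1 from funext fun i => mul_inv_cancel₀ (hz i), map_one]

lemma complexBlocks_inv {z : o → ℂ} (hz : ∀ i, z i ≠ 0) :
    (complexBlocks z)⁻¹ = complexBlocks z⁻¹ :=
  inv_eq_right_inv (complexBlocks_mul_inv hz)

lemma isUnit_complexBlocks {z : o → ℂ} (hz : ∀ i, z i ≠ 0) : IsUnit (complexBlocks z) :=
  (isUnit_iff_isUnit_det _).2 (isUnit_det_of_right_inverse (complexBlocks_mul_inv hz))

lemma complexBlocks_mulVec_dotProduct_complexBlocks_mulVec (z w : o → ℂ) (v : Fin 2 × o → ℝ) :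
    (complexBlocks z *ᵥ v) ⬝ᵥ (complexBlocks w *ᵥ v) =
      ∑ i, (starRingEnd ℂ (z i) * w i).re * (v (0, i) ^ 2 + v (1, i) ^ 2) := by
  simp only [dotProduct, Fintype.sum_prod_type, Finset.sum_comm (γ := Fin 2),
    complexBlocks_apply, blockDiagonal_mulVec_apply]
  refine Finset.sum_congr rfl fun i _ => ?_
  simp only [mulVec, dotProduct, of_apply, cons_val', cons_val_fin_one, Fin.sum_univ_two,
    cons_val_zero, cons_val_one, Complex.mul_re, Complex.conj_re, Complex.conj_im]
  ring

end complexBlocks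

open Complex in
lemma Jbar_eq_complexBlocks (n : ℕ) (b : Fin n → ℝ) :
    Jbar n b = complexBlocks fun i => -(b i * I) := by
  simp [Jbar, complexBlocks_apply]

open Complex in
lemma exp_smul_Jbar (n : ℕ) (b : Fin n → ℝ) (τ : ℝ) :
    NormedSpace.exp (τ • Jbar n b) = complexBlocks fun i => Complex.exp (-(b i * τ * I)) := by
  rw [Jbar_eq_complexBlocks, smul_complexBlocks, exp_complexBlocks]
  refine congrArg _ (funext fun i => ?_)
  ring_nf

open Complex in
lemma Dmat_eq_complexBlocks (n : ℕ) (b : Fin n → ℝ) (τ : ℝ) (hb : ∀ i, b i ≠ 0) :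
    Dmat n b τ = complexBlocks fun i =>
      2 * Complex.sin (b i * τ / 2) / b i * Complex.exp (-(b i * τ / 2 * I)) := by
  have hJ : (Jbar n b)⁻¹ = complexBlocks fun i => (-(b i * I))⁻¹ := by
    rw [Jbar_eq_complexBlocks, complexBlocks_inv fun i => by simp [hb i]]
    rfl
  rw [Dmat, hJ, exp_smul_Jbar, ← map_one complexBlocks, ← map_sub, ← map_mul]
  refine congrArg _ (funext fun i => ?_)
  rw [Pi.mul_apply, Pi.sub_apply, Pi.one_apply, Complex.exp_neg_mul_I_sub_one]
  field_simp [hb i]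

lemma gradz_eq_complexBlocks_mulVec (n : ℕ) (b : Fin n → ℝ) (τ : ℝ) (h : Fin 2 × Fin n → ℝ) :
    gradz n b τ h =
      complexBlocks (fun i => ((b i * τ - Real.sin (b i * τ)) / b i : ℝ)) *ᵥ h := by
  ext ⟨k, i⟩
  rw [complexBlocks_apply, blockDiagonal_mulVec_apply]
  simp only [Complex.ofReal_re, Complex.ofReal_im]
  fin_cases k <;>
    simp only [gradz, Fin.zero_eta, Fin.mk_one, mulVec, dotProduct, of_apply, cons_val',
      cons_val_fin_one, cons_val_zero, cons_val_one, Fin.sum_univ_two, neg_zero, zero_mul,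
      add_zero, zero_add] <;>
    ring

open Complex in
lemma re_inv_mul_sub_mul_exp (B τ : ℝ) (hs : Real.sin (B * τ / 2) ≠ 0) :
    ((2 * Complex.sin (B * τ / 2) / B * Complex.exp (-(B * τ / 2 * I)))⁻¹ *
        (2 * Complex.sin (B * τ / 2) / B * Complex.exp (-(B * τ / 2 * I)) -
          τ * Complex.exp (-(B * τ * I)))).re =
      1 - B * τ * Real.cos (B * τ / 2) / (2 * Real.sin (B * τ / 2)) := by
  have hB : (B : ℂ) ≠ 0 := by rintro hB; simp_all
  have hs' : Complex.sin (B * τ / 2) ≠ 0 := by exact_mod_cast hs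
  have hsq : Complex.exp (-(B * τ * I)) = Complex.exp (-(B * τ / 2 * I)) ^ 2 := by
    rw [← Complex.exp_nat_mul]; ring_nf
  have h : (2 * Complex.sin (B * τ / 2) / B * Complex.exp (-(B * τ / 2 * I)))⁻¹ *
        (2 * Complex.sin (B * τ / 2) / B * Complex.exp (-(B * τ / 2 * I)) -
          τ * Complex.exp (-(B * τ * I))) =
      1 - ((B * τ / (2 * Real.sin (B * τ / 2)) : ℝ) : ℂ) * Complex.exp ((-(B * τ / 2) : ℝ) * I) := by
    rw [hsq]
    push_cast
    field_simp [Complex.exp_ne_zero]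
  rw [h, sub_re, one_re, re_ofReal_mul, exp_ofReal_mul_I_re, Real.cos_neg]
  ring

lemma psi_summand_eq (B τ r : ℝ) (hs : Real.sin (B * τ / 2) ≠ 0) :
    (B * τ - Real.sin (B * τ)) / B *
        (1 - B * τ * Real.cos (B * τ / 2) / (2 * Real.sin (B * τ / 2))) * r -
      (r * (B * τ - Real.sin (B * τ)) / (2 * B) - τ * (r / 2 * (1 - Real.cos (B * τ)))) =
    r / 2 * (3 * τ - B * τ ^ 2 * Real.cos (B * τ / 2) / Real.sin (B * τ / 2) -
      Real.sin (B * τ) / B) := by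
  have hB : B ≠ 0 := by rintro rfl; simp_all
  have hsin : Real.sin (B * τ) = 2 * Real.sin (B * τ / 2) * Real.cos (B * τ / 2) := by
    rw [← Real.sin_two_mul]; ring_nf
  have hcos : Real.cos (B * τ) = 1 - 2 * Real.sin (B * τ / 2) ^ 2 := by
    nth_rw 1 [show B * τ = 2 * (B * τ / 2) by ring]
    rw [Real.cos_two_mul, Real.cos_sq']
    ring
  rw [hsin, hcos]
  field_simp
  linear_combination 2 * r * B * τ * Real.sin (B * τ / 2) * Real.sin_sq_add_cos_sq (B * τ / 2)

theorem statement14_general (n : ℕ) (b : Fin n → ℝ)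
    (τ : ℝ) (hsin : ∀ i, Real.sin (b i * τ / 2) ≠ 0)
    (h : Fin 2 × Fin n → ℝ) :
    IsUnit (Dmat n b τ) ∧
    gradz n b τ h ⬝ᵥ
        (Dmat n b τ)⁻¹.mulVec (xhat n b τ h - τ • hhat n b τ h) -
      (zhat n b τ h -
        τ * ∑ i, Real.sqrt (h (0, i) ^ 2 + h (1, i) ^ 2) ^ 2 / 2 *
          (1 - Real.cos (b i * τ))) =
    ∑ i, Real.sqrt (h (0, i) ^ 2 + h (1, i) ^ 2) ^ 2 / 2 *
      (3 * τ - b i * τ ^ 2 * Real.cos (b i * τ / 2) / Real.sin (b i * τ / 2) -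
        Real.sin (b i * τ) / b i) := by
  have hb : ∀ i, b i ≠ 0 := fun i hi => hsin i (by simp [hi])
  have hd : ∀ i, 2 * Complex.sin (b i * τ / 2) / b i *
      Complex.exp (-(b i * τ / 2 * Complex.I)) ≠ 0 := fun i => by
    have hs : Complex.sin (b i * τ / 2) ≠ 0 := by exact_mod_cast hsin i
    simp [Complex.exp_ne_zero, hb i, hs]
  rw [xhat, hhat, ← smul_mulVec, ← sub_mulVec, Dmat_eq_complexBlocks n b τ hb, exp_smul_Jbar,
    smul_complexBlocks, ← map_sub, complexBlocks_inv hd, mulVec_mulVec, ← map_mul,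
    gradz_eq_complexBlocks_mulVec, complexBlocks_mulVec_dotProduct_complexBlocks_mulVec, zhat,
    Finset.mul_sum, ← Finset.sum_sub_distrib, ← Finset.sum_sub_distrib]
  refine ⟨isUnit_complexBlocks hd, Finset.sum_congr rfl fun i _ => ?_⟩
  simp only [Pi.mul_apply, Pi.inv_apply, Pi.sub_apply, Complex.conj_ofReal,
    Complex.re_ofReal_mul, re_inv_mul_sub_mul_exp _ _ (hsin i),
    Real.sq_sqrt (by positivity : 0 ≤ h (0, i) ^ 2 + h (1, i) ^ 2)]
  exact psi_summand_eq _ _ _ (hsin i)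

/-- For `n ≥ 1`, `b₁, …, bₙ > 0`, `τ > 0` with `sin(bᵢτ/2) ≠ 0`
for all `i`, and `h ∈ ℝ^{2n}` with `rᵢ = √(h_{2i−1}² + h_{2i}²)`: the matrix
`D(τ) = J̄⁻¹(e^{τJ̄} − I)` is invertible and
`∇_h ẑ(τ,h) · D(τ)⁻¹ · (x̂(τ,h) − τ·ĥ(τ,h)) − (ẑ(τ,h) − τ·∂ẑ/∂t(τ,h))
  = Σ_i (rᵢ²/2)·(3τ − bᵢτ²·cos(bᵢτ/2)/sin(bᵢτ/2) − sin(bᵢτ)/bᵢ)`,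
where `∂ẑ/∂t(τ,h) = Σ_i (rᵢ²/2)·(1 − cos(bᵢτ))`. -/
theorem statement14 (n : ℕ) (hn : 1 ≤ n) (b : Fin n → ℝ) (hb : ∀ i, 0 < b i)
    (τ : ℝ) (hτ : 0 < τ) (hsin : ∀ i, Real.sin (b i * τ / 2) ≠ 0)
    (h : Fin 2 × Fin n → ℝ) :
    IsUnit (Dmat n b τ) ∧
    gradz n b τ h ⬝ᵥ
        (Dmat n b τ)⁻¹.mulVec (xhat n b τ h - τ • hhat n b τ h) -
      (zhat n b τ h -
        τ * ∑ i, Real.sqrt (h (0, i) ^ 2 + h (1, i) ^ 2) ^ 2 / 2 *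
          (1 - Real.cos (b i * τ))) =
    ∑ i, Real.sqrt (h (0, i) ^ 2 + h (1, i) ^ 2) ^ 2 / 2 *
      (3 * τ - b i * τ ^ 2 * Real.cos (b i * τ / 2) / Real.sin (b i * τ / 2) -
        Real.sin (b i * τ) / b i) :=
  statement14_general n b τ hsin h
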